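/- arXiv:2511.21628 — 2 statements merged into one kernel-verified Lean document; each statement's English description precedes it below -/
import Mathlib

section
/- Let s,ℓ,c be positive integers with c+ℓ=s and n=3s-ℓ=2ℓ+3c, and let d ≥ 0 be an even integer. If F ⊆ 2^[n] is a shifted family with d(F) ≤ d, then y_F(2) ≥ min{(4ℓ+3c+d−2)(3c−d+1)/2, (ℓ+3c−d/2+1)(ℓ+3c−d/2)/2}. Moreover, equality is achieved only if F^{(2)} = ([2ℓ+d−1] choose 2) or F^{(2)} = {F ∈ ([n] choose 2) : F ∩ [ℓ+d/2−1] ≠ ∅}. -/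
open Finset

/-- The ground set `[n] = {1, 2, …, n}`. -/
def ground (n : ℕ) : Finset ℕ := Finset.Icc 1 n

-- The matching number `ν(F)` of a family: the size of the largest pairwise
-- disjoint subfamily of `F`.
open Classical in
noncomputable def matchingNumber (F : Finset (Finset ℕ)) : ℕ :=
  (F.powerset.filter fun M : Finset (Finset ℕ) =>
      (M : Set (Finset ℕ)).Pairwise fun A B => Disjoint A B).sup Finset.card

-- `e(n, s)`: the maximum size of a family `F ⊆ 2^[n]` with `ν(F) < s`.
open Classical in
noncomputable def extremalNumber (n s : ℕ) : ℕ :=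
  (((ground n).powerset.powerset).filter fun F => matchingNumber F < s).sup Finset.card

/-- The family `P(s, ℓ) = {P ⊆ [n] : |P| + |P ∩ [ℓ-1]| ≥ 3}` (it depends only on `n, ℓ`). -/
def famP (n l : ℕ) : Finset (Finset ℕ) :=
  (ground n).powerset.filter fun A => 3 ≤ A.card + (A ∩ Finset.Icc 1 (l - 1)).card

/-- The family `P'(s, ℓ)`: all subsets of `[n]` of size at least `3` together with
all `2`-element subsets of `[2ℓ-1]`. -/
def famP' (n l : ℕ) : Finset (Finset ℕ) :=
  ((ground n).powerset.filter fun A => 3 ≤ A.card) ∪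
    (Finset.Icc 1 (2 * l - 1)).powersetCard 2

/-- The family `Q(s, ℓ)`: all subsets of `[n]` of size at least `3` together with all
`2`-element subsets of `[s+ℓ-1]`, with all `3`-element subsets of `[s+ℓ, n]` removed. -/
def famQ (n s l : ℕ) : Finset (Finset ℕ) :=
  (((ground n).powerset.filter fun A => 3 ≤ A.card) ∪
      (Finset.Icc 1 (s + l - 1)).powersetCard 2) \
    (Finset.Icc (s + l) n).powersetCard 3

/-- The family `W(s, ℓ) = {P ⊆ [n] : |P ∩ [2s-1]| ≥ 2}`. -/
def famW (n s : ℕ) : Finset (Finset ℕ) :=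
  (ground n).powerset.filter fun A => 2 ≤ (A ∩ Finset.Icc 1 (2 * s - 1)).card

/-- The `(i ← j)`-shift of a set. -/
def shiftSet (i j : ℕ) (A : Finset ℕ) : Finset ℕ :=
  if j ∈ A ∧ i ∉ A then insert i (A.erase j) else A

/-- The `(i ← j)`-shift of a family. -/
def shiftFam (i j : ℕ) (F : Finset (Finset ℕ)) : Finset (Finset ℕ) :=
  F.image (shiftSet i j) ∪ F.filter fun A => shiftSet i j A ∈ F

/-- A family `F ⊆ 2^[n]` is shifted if it is invariant under all `(i ← j)`-shifts
with `1 ≤ i < j ≤ n`. -/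
def IsShifted (n : ℕ) (F : Finset (Finset ℕ)) : Prop :=
  ∀ i j : ℕ, 1 ≤ i → i < j → j ≤ n → shiftFam i j F = F

/-- `A` can be shifted to `B`: some sequence of `(a ← b)`-shifts with `a < b`
transforms `A` into `B`. -/
def ShiftsTo (n : ℕ) (A B : Finset ℕ) : Prop :=
  Relation.ReflTransGen
    (fun X Y => ∃ a b : ℕ, 1 ≤ a ∧ a < b ∧ b ≤ n ∧ Y = shiftSet a b X) A B

/-- A family `F ⊆ 2^[n]` is an up-set if it is closed under supersets inside `[n]`. -/
def IsUpSet (n : ℕ) (F : Finset (Finset ℕ)) : Prop :=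
  ∀ A ∈ F, ∀ B : Finset ℕ, A ⊆ B → B ⊆ ground n → B ∈ F

/-- The `k`-th layer of a family: its `k`-element members (as subsets of `[n]`). -/
def layer (n : ℕ) (F : Finset (Finset ℕ)) (k : ℕ) : Finset (Finset ℕ) :=
  F ∩ (ground n).powersetCard k

/-- `y_F(k)`: the number of `k`-element subsets of `[n]` that do not belong to `F`. -/
def yF (n : ℕ) (F : Finset (Finset ℕ)) (k : ℕ) : ℕ :=
  Nat.choose n k - (layer n F k).card

/-- The defining condition for `d(F)` (with parameter `ℓ`). -/
def DCond (l : ℕ) (F : Finset (Finset ℕ)) (d : ℕ) : Prop :=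
  (Even d ∧ ∃ i ∈ Finset.Icc 1 (l + d / 2), ({i, 2 * l + d + 1 - i} : Finset ℕ) ∉ F) ∨
  (Odd d ∧ (({1, 2 * l + d} : Finset ℕ) ∉ F ∨
    ∃ i ∈ Finset.Icc 3 (l + (d + 1) / 2), ({i, 2 * l + d + 2 - i} : Finset ℕ) ∉ F))

/-- `d(F)`: the smallest `d ≥ 0` satisfying the condition `DCond ℓ F d`. -/
noncomputable def dF (l : ℕ) (F : Finset (Finset ℕ)) : ℕ := sInf {d : ℕ | DCond l F d}

/-!
Write `d = 2e`. Since `F` is shifted, the condition defining `d(F) ≤ d` yields a missing pair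
`{i, 2ℓ + d + 1 - i}` with `1 ≤ i ≤ ℓ + e`, and then every pair `{a, b}` with `i ≤ a` and
`2ℓ + d + 1 - i ≤ b` is missing too. There are `g(i)/2` such pairs, where
`g(i) = (4ℓ + 3c + d + 1 - 3i)(3c - d + i)` is a concave quadratic in `i`, so
`2 y_F(2) ≥ g(i) ≥ min (g 1) (g (ℓ + e))`, the two terms of the bound. Equality forces
`i ∈ {1, ℓ + e}` and the missing pairs to be exactly those counted, which gives the two
extremal layers. When `d > 3c` the first term is not positive, and equality forces `y_F(2) = 0`.
-/

section ConcaveQuadratic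

variable {R : Type*} [CommRing R] [LinearOrder R] [IsStrictOrderedRing R] {p q r a b x : R}

/- Both lemmas rest on the identity, for `g = p X² + q X + r`,
`(b - a) g(x) = (b - x) g(a) + (x - a) g(b) - p (x - a) (b - x) (b - a)`. -/
theorem min_le_of_concave_quadratic (hp : p ≤ 0) (hax : a ≤ x) (hxb : x ≤ b) :
    min (p * a ^ 2 + q * a + r) (p * b ^ 2 + q * b + r) ≤ p * x ^ 2 + q * x + r := by
  have hma := min_le_left (p * a ^ 2 + q * a + r) (p * b ^ 2 + q * b + r)
  have hmb := min_le_right (p * a ^ 2 + q * a + r) (p * b ^ 2 + q * b + r)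
  rcases hax.lt_or_eq with hax | rfl
  · have hcurv : 0 ≤ -p * ((x - a) * (b - x)) * (b - a) :=
      mul_nonneg (mul_nonneg (neg_nonneg.2 hp) (mul_nonneg (sub_nonneg.2 hax.le)
        (sub_nonneg.2 hxb))) (sub_nonneg.2 (hax.le.trans hxb))
    nlinarith [mul_nonneg (sub_nonneg.2 hxb) (sub_nonneg.2 hma),
      mul_nonneg (sub_nonneg.2 hax.le) (sub_nonneg.2 hmb)]
  · exact hma

theorem min_lt_of_concave_quadratic (hp : p < 0) (hax : a < x) (hxb : x < b) :
    min (p * a ^ 2 + q * a + r) (p * b ^ 2 + q * b + r) < p * x ^ 2 + q * x + r := by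
  have hma := min_le_left (p * a ^ 2 + q * a + r) (p * b ^ 2 + q * b + r)
  have hmb := min_le_right (p * a ^ 2 + q * a + r) (p * b ^ 2 + q * b + r)
  have hcurv : 0 < -p * ((x - a) * (b - x)) * (b - a) :=
    mul_pos (mul_pos (neg_pos.2 hp) (mul_pos (sub_pos.2 hax) (sub_pos.2 hxb)))
      (sub_pos.2 (hax.trans hxb))
  nlinarith [mul_nonneg (sub_nonneg.2 hxb.le) (sub_nonneg.2 hma),
    mul_nonneg (sub_nonneg.2 hax.le) (sub_nonneg.2 hmb)]

end ConcaveQuadratic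

theorem shiftSet_insert {i j : ℕ} {B : Finset ℕ} (hij : i ≠ j) (hi : i ∉ B) (hj : j ∉ B) :
    shiftSet i j (insert j B) = insert i B := by
  rw [shiftSet, if_pos ⟨mem_insert_self j B, by simp [hij, hi]⟩, erase_insert hj]

namespace IsShifted

variable {n : ℕ} {F : Finset (Finset ℕ)}

theorem shiftSet_mem (hsh : IsShifted n F) {i j : ℕ} (hi : 1 ≤ i) (hij : i < j) (hjn : j ≤ n)
    {A : Finset ℕ} (hA : A ∈ F) : shiftSet i j A ∈ F := by
  rw [← hsh i j hi hij hjn]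
  exact mem_union_left _ (mem_image_of_mem _ hA)

theorem pair_mem_of_le (hsh : IsShifted n F) {a b a' b' : ℕ} (ha' : 1 ≤ a') (haa : a' ≤ a)
    (hbb : b' ≤ b) (hab' : a' < b') (hab : a < b) (hbn : b ≤ n) (h : {a, b} ∈ F) :
    {a', b'} ∈ F := by
  have hleft : {a', b} ∈ F := by
    rcases haa.lt_or_eq with haa | rfl
    · rw [← shiftSet_insert haa.ne (by rw [mem_singleton]; omega) (by rw [mem_singleton]; omega)]
      exact hsh.shiftSet_mem ha' haa (by omega) h
    · exact h
  rcases hbb.lt_or_eq with hbb | rfl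
  · rw [pair_comm] at hleft ⊢
    rw [← shiftSet_insert hbb.ne (by rw [mem_singleton]; omega) (by rw [mem_singleton]; omega)]
    exact hsh.shiftSet_mem (by omega) hbb hbn hleft
  · exact hleft

theorem pair_notMem_of_le (hsh : IsShifted n F) (hF : ∀ A ∈ F, A ⊆ ground n)
    {a b a' b' : ℕ} (ha' : 1 ≤ a') (haa : a' ≤ a) (hbb : b' ≤ b) (hab' : a' < b')
    (hab : a < b) (h : {a', b'} ∉ F) : {a, b} ∉ F := fun hmem =>
  h (hsh.pair_mem_of_le ha' haa hbb hab' hab (mem_Icc.1 (hF _ hmem (by simp))).2 hmem)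

end IsShifted

theorem dCond_nonempty {n l : ℕ} {F : Finset (Finset ℕ)} (hF : ∀ A ∈ F, A ⊆ ground n) :
    {d | DCond l F d}.Nonempty := by
  refine ⟨2 * n + 2, Or.inl ⟨even_two_mul (n + 1), 1, mem_Icc.2 ⟨le_rfl, by omega⟩,
    fun hmem => ?_⟩⟩
  have := mem_Icc.1 (hF _ hmem (mem_insert_of_mem (mem_singleton_self _)))
  omega

theorem exists_pair_notMem_of_dF_le {n l e : ℕ} {F : Finset (Finset ℕ)} (hl : 0 < l)
    (hF : ∀ A ∈ F, A ⊆ ground n) (hsh : IsShifted n F) (hdF : dF l F ≤ 2 * e) :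
    ∃ i, 1 ≤ i ∧ i ≤ l + e ∧ {i, 2 * l + 2 * e + 1 - i} ∉ F := by
  have hcond : DCond l F (dF l F) := Nat.sInf_mem (dCond_nonempty hF)
  generalize dF l F = d₀ at hcond hdF
  rcases hcond with ⟨⟨k, rfl⟩, i, hi, hnot⟩ | ⟨⟨k, rfl⟩, hnot | ⟨i, hi, hnot⟩⟩
  · rw [mem_Icc] at hi
    exact ⟨i, hi.1, by omega,
      hsh.pair_notMem_of_le hF hi.1 le_rfl (by omega) (by omega) (by omega) hnot⟩
  · exact ⟨1, le_rfl, by omega,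
      hsh.pair_notMem_of_le hF le_rfl le_rfl (by omega) (by omega) (by omega) hnot⟩
  · rw [mem_Icc] at hi
    exact ⟨i, by omega, by omega,
      hsh.pair_notMem_of_le hF (by omega) le_rfl (by omega) (by omega) (by omega) hnot⟩

theorem two_mul_choose_two (N : ℕ) : 2 * (N.choose 2 : ℤ) = N * (N - 1) := by
  have h : 2 * (N.choose 2 : ℚ) = N * (N - 1) := by rw [Nat.cast_choose_two]; ring
  exact_mod_cast h

def pairsBeyond (i k n : ℕ) : Finset (Finset ℕ) :=
  (Icc i n).powersetCard 2 \ (Icc i k).powersetCard 2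

theorem two_mul_card_pairsBeyond {i k n : ℕ} (hik : i ≤ k + 1) (hkn : k ≤ n) :
    2 * (#(pairsBeyond i k n) : ℤ) =
      ((n : ℤ) + 1 - i) * (n - i) - ((k : ℤ) + 1 - i) * (k - i) := by
  rw [pairsBeyond, card_sdiff_of_subset (powersetCard_mono (Icc_subset_Icc_right hkn)),
    card_powersetCard, card_powersetCard, Nat.card_Icc, Nat.card_Icc,
    Nat.cast_sub (Nat.choose_le_choose 2 (by omega)), mul_sub, two_mul_choose_two,
    two_mul_choose_two]
  push_cast [show i ≤ n + 1 by omega, hik]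
  ring

theorem exists_lt_of_card_eq_two {A : Finset ℕ} (h : #A = 2) : ∃ a b, a < b ∧ A = {a, b} := by
  obtain ⟨x, y, hxy, rfl⟩ := card_eq_two.1 h
  rcases hxy.lt_or_gt with hxy | hxy
  · exact ⟨x, y, hxy, rfl⟩
  · exact ⟨y, x, hxy, pair_comm x y⟩

theorem IsShifted.pairsBeyond_subset {n i k : ℕ} {F : Finset (Finset ℕ)} (hsh : IsShifted n F)
    (hF : ∀ A ∈ F, A ⊆ ground n) (hi : 1 ≤ i) (hik : i ≤ k) (h : {i, k + 1} ∉ F) :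
    pairsBeyond i k n ⊆ (ground n).powersetCard 2 \ F := by
  intro A hA
  simp only [pairsBeyond, mem_sdiff, mem_powersetCard] at hA
  obtain ⟨⟨hAn, hA2⟩, hAk⟩ := hA
  obtain ⟨a, b, hab, rfl⟩ := exists_lt_of_card_eq_two hA2
  simp only [insert_subset_iff, singleton_subset_iff, mem_Icc] at hAn hAk
  refine mem_sdiff.2 ⟨mem_powersetCard.2 ⟨?_, hA2⟩,
    hsh.pair_notMem_of_le hF hi (by omega) (by omega) (by omega) hab h⟩
  simp only [ground, insert_subset_iff, singleton_subset_iff, mem_Icc]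
  omega

theorem card_powersetCard_sdiff {n k : ℕ} (F : Finset (Finset ℕ)) :
    #((ground n).powersetCard k \ F) = yF n F k := by
  rw [card_sdiff, yF, layer, card_powersetCard, ground, Nat.card_Icc, Nat.add_sub_cancel]

theorem layer_eq_sdiff {n k : ℕ} (F : Finset (Finset ℕ)) :
    layer n F k = (ground n).powersetCard k \ ((ground n).powersetCard k \ F) := by
  rw [sdiff_sdiff_right_self, inf_eq_inter, layer, inter_comm]

theorem powersetCard_sdiff_pairsBeyond {i k n : ℕ} (hkn : k ≤ n) :
    (Icc i n).powersetCard 2 \ pairsBeyond i k n = (Icc i k).powersetCard 2 := by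
  rw [pairsBeyond, sdiff_sdiff_right_self, inf_eq_inter,
    inter_eq_right.2 (powersetCard_mono (Icc_subset_Icc_right hkn))]

theorem pairsBeyond_self (i n : ℕ) : pairsBeyond i i n = (Icc i n).powersetCard 2 := by
  rw [pairsBeyond, Icc_self, powersetCard_eq_empty.2 (by simp : #({i} : Finset ℕ) < 2),
    sdiff_empty]

theorem powersetCard_Icc_sdiff_powersetCard_Icc (n L m : ℕ) :
    (Icc 1 n).powersetCard m \ (Icc L n).powersetCard m =
      ((Icc 1 n).powersetCard m).filter fun A => (A ∩ Icc 1 (L - 1)).Nonempty := by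
  ext A
  simp only [mem_sdiff, mem_filter, mem_powersetCard]
  refine and_congr_right fun ⟨hA, hcard⟩ => ?_
  simp only [hcard, and_true, not_subset, Finset.Nonempty, mem_inter, mem_Icc]
  constructor
  · rintro ⟨x, hx, hxL⟩
    have hxn := mem_Icc.1 (hA hx)
    exact ⟨x, hx, hxn.1, by omega⟩
  · rintro ⟨x, hx, _, hxL⟩
    have hxn := mem_Icc.1 (hA hx)
    exact ⟨x, hx, by omega⟩

theorem two_mul_card_pairsBeyond_eq {n l c d i : ℕ} (hn : n = 2 * l + 3 * c) (hdc : d ≤ 3 * c)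
    (hi : 2 * i ≤ 2 * l + d) :
    2 * (#(pairsBeyond i (2 * l + d - i) n) : ℤ) =
      -3 * (i : ℤ) ^ 2 + (4 * l - 6 * c + 4 * d + 1) * i
        + (4 * l + 3 * c + d + 1) * (3 * c - d) := by
  rw [two_mul_card_pairsBeyond (by omega) (by omega), hn]
  push_cast [show i ≤ 2 * l + d by omega]
  ring

theorem yF_two_bound_of_le_three_mul {n l c d e : ℕ} {F : Finset (Finset ℕ)} (hl : 0 < l)
    (hn : n = 2 * l + 3 * c) (hde : d = 2 * e) (hdc : d ≤ 3 * c)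
    (hF : ∀ A ∈ F, A ⊆ ground n) (hsh : IsShifted n F) (hdF : dF l F ≤ d) :
    min ((4 * l + 3 * c + d - 2 : ℤ) * (3 * c - d + 1))
        ((l + 3 * c - e + 1 : ℤ) * (l + 3 * c - e)) ≤ 2 * (yF n F 2 : ℤ) ∧
    (2 * (yF n F 2 : ℤ) =
        min ((4 * l + 3 * c + d - 2 : ℤ) * (3 * c - d + 1))
          ((l + 3 * c - e + 1 : ℤ) * (l + 3 * c - e)) →
      layer n F 2 = (Icc 1 (2 * l + d - 1)).powersetCard 2 ∨
      layer n F 2 = ((ground n).powersetCard 2).filter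
        fun A => (A ∩ Icc 1 (l + e - 1)).Nonempty) := by
  obtain ⟨i, hi1, hiL, hnot⟩ := exists_pair_notMem_of_dF_le hl hF hsh (hde ▸ hdF)
  have hsub : pairsBeyond i (2 * l + d - i) n ⊆ (ground n).powersetCard 2 \ F :=
    hsh.pairsBeyond_subset hF hi1 (by omega)
      (by rwa [show 2 * l + d - i + 1 = 2 * l + 2 * e + 1 - i by omega])
  have hcard := card_le_card hsub
  rw [card_powersetCard_sdiff] at hcard
  set g : ℤ → ℤ := fun x =>
    -3 * x ^ 2 + (4 * l - 6 * c + 4 * d + 1) * x + (4 * l + 3 * c + d + 1) * (3 * c - d) with hg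
  have hgi : g i = 2 * #(pairsBeyond i (2 * l + d - i) n) :=
    (two_mul_card_pairsBeyond_eq hn hdc (by omega)).symm
  have hg1 : g 1 = (4 * l + 3 * c + d - 2 : ℤ) * (3 * c - d + 1) := by
    simp only [hg]; ring
  have hgL : g (l + e) = (l + 3 * c - e + 1 : ℤ) * (l + 3 * c - e) := by
    simp only [hg, hde]; push_cast; ring
  have hmin : min (g 1) (g (l + e)) ≤ g i :=
    min_le_of_concave_quadratic (by norm_num) (by exact_mod_cast hi1) (by exact_mod_cast hiL)
  rw [hg1, hgL] at hmin
  refine ⟨by omega, fun heq => ?_⟩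
  have hcone : pairsBeyond i (2 * l + d - i) n = (ground n).powersetCard 2 \ F :=
    eq_of_subset_of_card_le hsub (by rw [card_powersetCard_sdiff]; omega)
  have hend : i = 1 ∨ i = l + e := by
    by_contra! hmid
    have hlt : min (g 1) (g (l + e)) < g i :=
      min_lt_of_concave_quadratic (by norm_num) (by omega) (by omega)
    rw [hg1, hgL] at hlt
    omega
  rw [layer_eq_sdiff, ← hcone, ground]
  rcases hend with rfl | rfl
  · exact Or.inl (powersetCard_sdiff_pairsBeyond (by omega))
  · right
    rw [show 2 * l + d - (l + e) = l + e by omega, pairsBeyond_self,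
      powersetCard_Icc_sdiff_powersetCard_Icc]

theorem layer_eq_of_yF_eq_zero {n k : ℕ} {F : Finset (Finset ℕ)} (h : yF n F k = 0) :
    layer n F k = (ground n).powersetCard k := by
  rw [layer_eq_sdiff, card_eq_zero.1 ((card_powersetCard_sdiff F).trans h), sdiff_empty]

theorem yF_two_bound_of_three_mul_lt {n l c d : ℕ} {F : Finset (Finset ℕ)} (hl : 0 < l)
    (hn : n = 2 * l + 3 * c) (hdc : 3 * c < d) (m : ℤ) :
    min ((4 * l + 3 * c + d - 2 : ℤ) * (3 * c - d + 1)) m ≤ 2 * (yF n F 2 : ℤ) ∧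
    (2 * (yF n F 2 : ℤ) = min ((4 * l + 3 * c + d - 2 : ℤ) * (3 * c - d + 1)) m →
      layer n F 2 = (Icc 1 (2 * l + d - 1)).powersetCard 2) := by
  have hpos : 0 < (4 * l + 3 * c + d - 2 : ℤ) := by omega
  have hmin := min_le_left ((4 * l + 3 * c + d - 2 : ℤ) * (3 * c - d + 1)) m
  have hf1 := mul_nonpos_of_nonneg_of_nonpos hpos.le (by omega : (3 * c - d + 1 : ℤ) ≤ 0)
  refine ⟨by linarith [(yF n F 2).cast_nonneg (α := ℤ)], fun heq => ?_⟩
  have hd : d = 3 * c + 1 := by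
    by_contra hne
    have := mul_neg_of_pos_of_neg hpos (by omega : (3 * c - d + 1 : ℤ) < 0)
    linarith [(yF n F 2).cast_nonneg (α := ℤ)]
  rw [layer_eq_of_yF_eq_zero (by linarith), ground, show 2 * l + d - 1 = n by omega]

theorem stmt_8_general (n l c d : ℕ) (hl0 : 0 < l) (hn : n = 2 * l + 3 * c) (hd : Even d)
    (F : Finset (Finset ℕ)) (hF : ∀ A ∈ F, A ⊆ ground n) (hsh : IsShifted n F)
    (hdF : dF l F ≤ d) :
    min ((4 * (l : ℤ) + 3 * (c : ℤ) + (d : ℤ) - 2) * (3 * (c : ℤ) - (d : ℤ) + 1))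
        (((l : ℤ) + 3 * (c : ℤ) - (d : ℤ) / 2 + 1) * ((l : ℤ) + 3 * (c : ℤ) - (d : ℤ) / 2))
      ≤ 2 * (yF n F 2 : ℤ) ∧
    (2 * (yF n F 2 : ℤ) =
        min ((4 * (l : ℤ) + 3 * (c : ℤ) + (d : ℤ) - 2) * (3 * (c : ℤ) - (d : ℤ) + 1))
          (((l : ℤ) + 3 * (c : ℤ) - (d : ℤ) / 2 + 1) * ((l : ℤ) + 3 * (c : ℤ) - (d : ℤ) / 2)) →
      layer n F 2 = (Finset.Icc 1 (2 * l + d - 1)).powersetCard 2 ∨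
      layer n F 2 = ((ground n).powersetCard 2).filter
        fun A => (A ∩ Finset.Icc 1 (l + d / 2 - 1)).Nonempty) := by
  obtain ⟨e, hde⟩ := hd.two_dvd
  rw [show (d : ℤ) / 2 = e by omega, show d / 2 = e by omega]
  rcases le_or_gt d (3 * c) with hdc | hdc
  · exact yF_two_bound_of_le_three_mul hl0 hn hde hdc hF hsh hdF
  · obtain ⟨hbound, hextremal⟩ := yF_two_bound_of_three_mul_lt (F := F) hl0 hn hdc
      ((l + 3 * c - e + 1 : ℤ) * (l + 3 * c - e))
    exact ⟨hbound, fun heq => Or.inl (hextremal heq)⟩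

theorem stmt_8 (n s l c d : ℕ) (hs0 : 0 < s) (hl0 : 0 < l) (hc0 : 0 < c)
    (hcl : c + l = s) (hn : n = 2 * l + 3 * c) (hd : Even d)
    (F : Finset (Finset ℕ)) (hF : ∀ A ∈ F, A ⊆ ground n) (hsh : IsShifted n F)
    (hdF : dF l F ≤ d) :
    min ((4 * (l : ℤ) + 3 * (c : ℤ) + (d : ℤ) - 2) * (3 * (c : ℤ) - (d : ℤ) + 1))
        (((l : ℤ) + 3 * (c : ℤ) - (d : ℤ) / 2 + 1) * ((l : ℤ) + 3 * (c : ℤ) - (d : ℤ) / 2))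
      ≤ 2 * (yF n F 2 : ℤ) ∧
    (2 * (yF n F 2 : ℤ) =
        min ((4 * (l : ℤ) + 3 * (c : ℤ) + (d : ℤ) - 2) * (3 * (c : ℤ) - (d : ℤ) + 1))
          (((l : ℤ) + 3 * (c : ℤ) - (d : ℤ) / 2 + 1) * ((l : ℤ) + 3 * (c : ℤ) - (d : ℤ) / 2)) →
      layer n F 2 = (Finset.Icc 1 (2 * l + d - 1)).powersetCard 2 ∨
      layer n F 2 = ((ground n).powersetCard 2).filter
        fun A => (A ∩ Finset.Icc 1 (l + d / 2 - 1)).Nonempty) :=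
  stmt_8_general n l c d hl0 hn hd F hF hsh hdF
end

section
/- Let s,ℓ,c be positive integers with c+ℓ=s and n=3s-ℓ=2ℓ+3c, and let F ⊆ 2^[n] be a shifted family. If d(F) > 0 and ν(F) < s, then y_F(3) ≥ C(3c−1, 2). Moreover, equality is achieved only if F contains all sets in ([n] choose 3) \ ([2ℓ+1,n] choose 3). -/
open Finset

/-!
Since `d(F) > 0`, the family `F` contains the `ℓ` pairwise disjoint pairs `{i, 2ℓ+1-i} ⊆ [2ℓ]`.
So no perfect matching of `B = [2ℓ+1, n]` into triples (note `|B| = 3c`) lies inside `F`: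
it would extend these pairs to a matching of size `ℓ + c = s`. Double counting finishes the
proof: `B` has `C(3c-1, 2) · p` such matchings and each triple of `B` lies in exactly `p` of
them, so at least `C(3c-1, 2)` triples of `B` are missing from `F`. In case of equality every
missing triple lies in `B`.
-/

section PerfectTripleMatchings

variable {α : Type*} [DecidableEq α]

open Classical in
noncomputable def perfectTripleMatchings (V : Finset α) : Finset (Finset (Finset α)) :=
  (V.powersetCard 3).powerset.filter fun M =>
    M.biUnion id = V ∧ (M : Set (Finset α)).PairwiseDisjoint id

variable {V T : Finset α} {M N : Finset (Finset α)}

lemma mem_perfectTripleMatchings :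
    M ∈ perfectTripleMatchings V ↔
      (∀ T ∈ M, T.card = 3) ∧ M.biUnion id = V ∧
        (M : Set (Finset α)).PairwiseDisjoint id := by
  simp only [perfectTripleMatchings, mem_filter, mem_powerset, subset_iff, mem_powersetCard]
  constructor
  · rintro ⟨hM, hcover, hdisj⟩
    exact ⟨fun T hT => (hM hT).2, hcover, hdisj⟩
  · rintro ⟨hM, rfl, hdisj⟩
    exact ⟨fun T hT => ⟨subset_biUnion_of_mem id hT, hM T hT⟩, rfl, hdisj⟩

lemma subset_of_mem_perfectTripleMatchings (hM : M ∈ perfectTripleMatchings V) (hT : T ∈ M) :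
    T ⊆ V :=
  (mem_perfectTripleMatchings.1 hM).2.1 ▸ subset_biUnion_of_mem id hT

lemma erase_mem_perfectTripleMatchings (hM : M ∈ perfectTripleMatchings V) (hT : T ∈ M) :
    M.erase T ∈ perfectTripleMatchings (V \ T) := by
  obtain ⟨hcard, hcover, hdisj⟩ := mem_perfectTripleMatchings.1 hM
  refine mem_perfectTripleMatchings.2 ⟨fun T' hT' => hcard T' (mem_of_mem_erase hT'), ?_,
    hdisj.subset (by simp)⟩
  rw [← hcover, ← insert_erase hT, biUnion_insert, id, erase_insert (notMem_erase T M),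
    union_sdiff_left]
  refine (Finset.sdiff_eq_self_iff_disjoint.2 ((disjoint_biUnion_left _ _ _).2 ?_)).symm
  exact fun T' hT' => hdisj (mem_of_mem_erase hT') hT (ne_of_mem_erase hT')

lemma insert_mem_perfectTripleMatchings (hTV : T ⊆ V) (hT : T.card = 3)
    (hN : N ∈ perfectTripleMatchings (V \ T)) : insert T N ∈ perfectTripleMatchings V := by
  obtain ⟨hcard, hcover, hdisj⟩ := mem_perfectTripleMatchings.1 hN
  have hdisjT : ∀ T' ∈ N, Disjoint T T' := fun T' hT' =>
    disjoint_of_subset_right (subset_of_mem_perfectTripleMatchings hN hT') disjoint_sdiff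
  refine mem_perfectTripleMatchings.2 ⟨?_, ?_, ?_⟩
  · simpa [hT] using hcard
  · rw [biUnion_insert, hcover, id, union_sdiff_of_subset hTV]
  · rw [coe_insert]
    exact hdisj.insert fun T' hT' _ => hdisjT T' hT'

lemma notMem_of_mem_perfectTripleMatchings_sdiff (hT : T.card = 3)
    (hN : N ∈ perfectTripleMatchings (V \ T)) : T ∉ N := fun hTN => by
  obtain ⟨x, hx⟩ := card_pos.1 (hT ▸ Nat.succ_pos 2 : 0 < T.card)
  exact (mem_sdiff.1 (subset_of_mem_perfectTripleMatchings hN hTN hx)).2 hx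

lemma card_filter_mem_perfectTripleMatchings (hTV : T ⊆ V) (hT : T.card = 3) :
    ((perfectTripleMatchings V).filter (T ∈ ·)).card =
      (perfectTripleMatchings (V \ T)).card := by
  refine card_nbij' (·.erase T) (insert T) ?_ ?_ ?_ ?_
  · intro M hM
    simp only [coe_filter, Set.mem_ofPred_eq] at hM
    exact erase_mem_perfectTripleMatchings hM.1 hM.2
  · intro N hN
    simpa using insert_mem_perfectTripleMatchings hTV hT hN
  · intro M hM
    exact insert_erase (mem_filter.1 hM).2
  · intro N hN
    exact erase_insert (notMem_of_mem_perfectTripleMatchings_sdiff hT hN)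

lemma card_filter_mem_powersetCard_succ {v : α} (hv : v ∈ V) (k : ℕ) :
    ((V.powersetCard (k + 1)).filter (v ∈ ·)).card = (V.card - 1).choose k := by
  have hnotMem : ∀ S ∈ (V.erase v).powersetCard k, v ∉ S := fun S hS hvS => by
    simpa using (mem_powersetCard.1 hS).1 hvS
  have himage : (V.powersetCard (k + 1)).filter (v ∈ ·) =
      ((V.erase v).powersetCard k).image (insert v) := by
    ext T
    simp only [mem_filter, mem_image]
    constructor
    · rintro ⟨hT, hvT⟩
      obtain ⟨hTV, hT⟩ := mem_powersetCard.1 hT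
      refine ⟨T.erase v, mem_powersetCard.2 ⟨erase_subset_erase v hTV, ?_⟩,
        insert_erase hvT⟩
      simp [card_erase_of_mem hvT, hT]
    · rintro ⟨S, hS, rfl⟩
      obtain ⟨hSV, hSk⟩ := mem_powersetCard.1 hS
      refine ⟨mem_powersetCard.2 ⟨insert_subset hv (hSV.trans (erase_subset v V)), ?_⟩,
        mem_insert_self v S⟩
      rw [card_insert_of_notMem (hnotMem S hS), hSk]
  rw [himage, card_image_of_injOn, card_powersetCard, card_erase_of_mem hv]
  intro S hS S' hS' h
  rw [← erase_insert (hnotMem S hS), ← erase_insert (hnotMem S' hS')]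
  exact congrArg (·.erase v) h

lemma perfectTripleMatchings_empty : perfectTripleMatchings (∅ : Finset α) = {∅} := by
  ext M
  rw [mem_singleton, mem_perfectTripleMatchings]
  constructor
  · rintro ⟨hcard, hcover, -⟩
    refine eq_empty_of_forall_notMem fun T hT => ?_
    have hT0 : T = ∅ := subset_empty.1 (hcover ▸ subset_biUnion_of_mem id hT)
    simpa [hT0] using hcard T hT
  · rintro rfl
    simp

lemma card_perfectTripleMatchings {c : ℕ} (hV : V.card = 3 * c) :
    (perfectTripleMatchings V).card = ∏ i ∈ range c, (3 * i + 2).choose 2 := by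
  induction c generalizing V with
  | zero =>
    rw [card_eq_zero.1 hV, perfectTripleMatchings_empty]
    rfl
  | succ c ih =>
    obtain ⟨v, hv⟩ := card_pos.1 (by omega : 0 < V.card)
    -- every perfect matching has exactly one triple through `v`
    have hsplit : perfectTripleMatchings V = ((V.powersetCard 3).filter (v ∈ ·)).biUnion
        fun T => (perfectTripleMatchings V).filter (T ∈ ·) := by
      ext M
      simp only [mem_biUnion, mem_filter, mem_powersetCard]
      refine ⟨fun hM => ?_, fun ⟨_, _, hM, _⟩ => hM⟩
      obtain ⟨T, hT, hvT⟩ := mem_biUnion.1 ((mem_perfectTripleMatchings.1 hM).2.1 ▸ hv)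
      exact ⟨T, ⟨⟨subset_of_mem_perfectTripleMatchings hM hT,
        (mem_perfectTripleMatchings.1 hM).1 T hT⟩, hvT⟩, hM, hT⟩
    have hdisj : ((V.powersetCard 3).filter (v ∈ ·) : Set (Finset α)).PairwiseDisjoint
        fun T => (perfectTripleMatchings V).filter (T ∈ ·) := by
      intro T₁ h₁ T₂ h₂ hne
      refine disjoint_filter.2 fun M hM hT₁ hT₂ => ?_
      exact disjoint_left.1 ((mem_perfectTripleMatchings.1 hM).2.2 hT₁ hT₂ hne)
        (mem_filter.1 h₁).2 (mem_filter.1 h₂).2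
    have hfiber : ∀ T ∈ (V.powersetCard 3).filter (v ∈ ·),
        ((perfectTripleMatchings V).filter (T ∈ ·)).card =
          ∏ i ∈ range c, (3 * i + 2).choose 2 := by
      intro T hT
      obtain ⟨hTV, hT⟩ := mem_powersetCard.1 (mem_filter.1 hT).1
      rw [card_filter_mem_perfectTripleMatchings hTV hT]
      exact ih (by rw [card_sdiff_of_subset hTV, hT, hV]; omega)
    rw [hsplit, card_biUnion hdisj, sum_congr rfl hfiber, sum_const,
      card_filter_mem_powersetCard_succ hv 2, hV, prod_range_succ, smul_eq_mul, mul_comm,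
      show 3 * (c + 1) - 1 = 3 * c + 2 by omega]

lemma card_eq_three_mul_of_mem_perfectTripleMatchings (hM : M ∈ perfectTripleMatchings V) :
    V.card = 3 * M.card := by
  obtain ⟨hcard, hcover, hdisj⟩ := mem_perfectTripleMatchings.1 hM
  rw [← hcover, card_biUnion hdisj]
  simp only [id, sum_congr rfl hcard, sum_const, smul_eq_mul, mul_comm]

lemma choose_le_card_sdiff_of_forall_exists_notMem {G : Finset (Finset α)} {c : ℕ}
    (hV : V.card = 3 * c) (hG : ∀ M ∈ perfectTripleMatchings V, ∃ T ∈ M, T ∉ G) :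
    (3 * c - 1).choose 2 ≤ (V.powersetCard 3 \ G).card := by
  cases c with
  | zero => simp
  | succ c =>
    set p := ∏ i ∈ range c, (3 * i + 2).choose 2
    have hp : 0 < p := prod_pos fun i _ => Nat.choose_pos (by omega)
    have hcover : perfectTripleMatchings V ⊆
        (V.powersetCard 3 \ G).biUnion fun T => (perfectTripleMatchings V).filter (T ∈ ·) := by
      intro M hM
      obtain ⟨T, hTM, hTG⟩ := hG M hM
      have hT : T ∈ V.powersetCard 3 := mem_powersetCard.2
        ⟨subset_of_mem_perfectTripleMatchings hM hTM, (mem_perfectTripleMatchings.1 hM).1 T hTM⟩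
      exact mem_biUnion.2 ⟨T, mem_sdiff.2 ⟨hT, hTG⟩, mem_filter.2 ⟨hM, hTM⟩⟩
    have hfiber : ∀ T ∈ V.powersetCard 3 \ G,
        ((perfectTripleMatchings V).filter (T ∈ ·)).card = p := by
      intro T hT
      obtain ⟨hTV, hT⟩ := mem_powersetCard.1 (mem_sdiff.1 hT).1
      rw [card_filter_mem_perfectTripleMatchings hTV hT]
      exact card_perfectTripleMatchings (by rw [card_sdiff_of_subset hTV, hT, hV]; omega)
    have key : (3 * c + 2).choose 2 * p ≤ (V.powersetCard 3 \ G).card * p :=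
      calc (3 * c + 2).choose 2 * p = (perfectTripleMatchings V).card := by
            rw [card_perfectTripleMatchings hV, prod_range_succ, mul_comm]
        _ ≤ ∑ T ∈ V.powersetCard 3 \ G, ((perfectTripleMatchings V).filter (T ∈ ·)).card :=
            (card_le_card hcover).trans card_biUnion_le
        _ = (V.powersetCard 3 \ G).card * p := by rw [sum_congr rfl hfiber, sum_const, smul_eq_mul]
    rw [show 3 * (c + 1) - 1 = 3 * c + 2 by omega]
    exact Nat.le_of_mul_le_mul_right key hp

end PerfectTripleMatchings

lemma card_le_matchingNumber {F M : Finset (Finset ℕ)} (hMF : M ⊆ F)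
    (hM : (M : Set (Finset ℕ)).PairwiseDisjoint id) : M.card ≤ matchingNumber F := by
  classical
  exact le_sup (mem_filter.2 ⟨mem_powerset.2 hMF, hM⟩)

lemma yF_eq_card_sdiff (n : ℕ) (F : Finset (Finset ℕ)) (k : ℕ) :
    yF n F k = ((ground n).powersetCard k \ F).card := by
  rw [yF, layer, card_sdiff, card_powersetCard, ground, Nat.card_Icc, Nat.add_sub_cancel]

def mirrorPairs (l : ℕ) : Finset (Finset ℕ) :=
  (Icc 1 l).image fun i => {i, 2 * l + 1 - i}

lemma mirrorPairs_subset_of_dF_pos {l : ℕ} {F : Finset (Finset ℕ)} (hd : 0 < dF l F) :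
    mirrorPairs l ⊆ F := by
  simp only [mirrorPairs, image_subset_iff]
  intro i hi
  by_contra h
  exact Nat.notMem_of_lt_sInf hd (Or.inl ⟨Even.zero, i, by simpa using hi, by simpa using h⟩)

lemma subset_Icc_of_mem_mirrorPairs {l : ℕ} {A : Finset ℕ} (hA : A ∈ mirrorPairs l) :
    A ⊆ Icc 1 (2 * l) := by
  obtain ⟨i, hi, rfl⟩ := mem_image.1 hA
  rw [mem_Icc] at hi
  intro x hx
  simp only [mem_insert, mem_singleton] at hx
  simp only [mem_Icc]
  omega

lemma card_mirrorPairs (l : ℕ) : (mirrorPairs l).card = l := by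
  rw [mirrorPairs, card_image_of_injOn, Nat.card_Icc, Nat.add_sub_cancel]
  intro i hi j hj hij
  simp only [coe_Icc, Set.mem_Icc] at hi hj
  have hij : ({i, 2 * l + 1 - i} : Finset ℕ) = {j, 2 * l + 1 - j} := hij
  have : i ∈ ({j, 2 * l + 1 - j} : Finset ℕ) := hij ▸ mem_insert_self _ _
  simp only [mem_insert, mem_singleton] at this
  omega

lemma pairwiseDisjoint_mirrorPairs (l : ℕ) :
    (mirrorPairs l : Set (Finset ℕ)).PairwiseDisjoint id := by
  simp only [mirrorPairs, coe_image]
  rintro _ ⟨i, hi, rfl⟩ _ ⟨j, hj, rfl⟩ hne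
  simp only [coe_Icc, Set.mem_Icc] at hi hj
  refine disjoint_left.2 fun x hx hx' => hne ?_
  simp only [id, mem_insert, mem_singleton] at hx hx'
  obtain rfl : i = j := by omega
  rfl

lemma add_card_le_matchingNumber_of_dF_pos {l m : ℕ} {F M : Finset (Finset ℕ)}
    (hd : 0 < dF l F) (hM : M ∈ perfectTripleMatchings (Icc (2 * l + 1) m)) (hMF : M ⊆ F) :
    l + M.card ≤ matchingNumber F := by
  have hdisj : ∀ A ∈ mirrorPairs l, ∀ T ∈ M, Disjoint A T := fun A hA T hT =>
    disjoint_of_subset_left (subset_Icc_of_mem_mirrorPairs hA) <|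
      disjoint_of_subset_right (subset_of_mem_perfectTripleMatchings hM hT) <|
        disjoint_left.2 fun x hx hx' => by simp only [mem_Icc] at hx hx'; omega
  have hPM : Disjoint (mirrorPairs l) M := disjoint_left.2 fun A hA hAM => by
    have hA3 := (mem_perfectTripleMatchings.1 hM).1 A hAM
    simp [disjoint_self.1 (hdisj A hA A hAM)] at hA3
  rw [← card_mirrorPairs l, ← card_union_of_disjoint hPM]
  refine card_le_matchingNumber (union_subset (mirrorPairs_subset_of_dF_pos hd) hMF) ?_
  rw [coe_union]
  exact (pairwiseDisjoint_mirrorPairs l).union (mem_perfectTripleMatchings.1 hM).2.2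
    fun A hA T hT _ => hdisj A hA T hT

theorem stmt_11_general (n s l c : ℕ) (hcl : c + l = s) (hn : n = 2 * l + 3 * c)
    (F : Finset (Finset ℕ)) (hd : 0 < dF l F) (hnu : matchingNumber F < s) :
    Nat.choose (3 * c - 1) 2 ≤ yF n F 3 ∧
      (yF n F 3 = Nat.choose (3 * c - 1) 2 →
        (ground n).powersetCard 3 \ (Finset.Icc (2 * l + 1) n).powersetCard 3 ⊆ F) := by
  set B := Icc (2 * l + 1) n
  have hB : B.card = 3 * c := by rw [Nat.card_Icc]; omega
  have hG : ∀ M ∈ perfectTripleMatchings B, ∃ T ∈ M, T ∉ F := by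
    intro M hM
    by_contra! hMF
    have := add_card_le_matchingNumber_of_dF_pos hd hM hMF
    have := card_eq_three_mul_of_mem_perfectTripleMatchings hM
    omega
  have hmiss := choose_le_card_sdiff_of_forall_exists_notMem hB hG
  have hsub : B.powersetCard 3 \ F ⊆ (ground n).powersetCard 3 \ F :=
    sdiff_subset_sdiff (powersetCard_mono (Icc_subset_Icc (by omega) le_rfl)) le_rfl
  rw [yF_eq_card_sdiff]
  refine ⟨hmiss.trans (card_le_card hsub), fun heq A hA => ?_⟩
  have hmissB := eq_of_subset_of_card_le hsub (heq ▸ hmiss)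
  obtain ⟨hA, hAB⟩ := mem_sdiff.1 hA
  by_contra hAF
  exact hAB (mem_sdiff.1 (hmissB ▸ mem_sdiff.2 ⟨hA, hAF⟩)).1

theorem stmt_11 (n s l c : ℕ) (hs0 : 0 < s) (hl0 : 0 < l) (hc0 : 0 < c)
    (hcl : c + l = s) (hn : n = 2 * l + 3 * c)
    (F : Finset (Finset ℕ)) (hF : ∀ A ∈ F, A ⊆ ground n) (hsh : IsShifted n F)
    (hd : 0 < dF l F) (hnu : matchingNumber F < s) :
    Nat.choose (3 * c - 1) 2 ≤ yF n F 3 ∧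
      (yF n F 3 = Nat.choose (3 * c - 1) 2 →
        (ground n).powersetCard 3 \ (Finset.Icc (2 * l + 1) n).powersetCard 3 ⊆ F) :=
  stmt_11_general n s l c hcl hn F hd hnu
end
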